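/- arXiv:2012.05112 — 2 statements merged into one kernel-verified Lean document; each statement's English description precedes it below -/
import Mathlib

section
/- Let q be a prime and let Γ = (V,E) be a complete digraph on 2q−1 vertices whose edges carry weights w(e) ∈ ℤ/qℤ, and suppose that there is no pair of distinct vertices u, v with w(u,v) = −w(v,u) in ℤ/qℤ. Then there exist two distinct vertices x and y in Γ such that for every residue s ∈ ℤ/qℤ there is a simple directed path from x to y whose total weight is congruent to s modulo q. -/
/-!
Fix a vertex `x` and split the other `2q - 2` vertices into `q - 1` rungs `(zᵢ, vᵢ)`, chosen so
that from the current end `vᵢ₋₁` the detour `vᵢ₋₁ → zᵢ → vᵢ` and the direct edge `vᵢ₋₁ → vᵢ`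
have different weights. Such an ordering of any two vertices `a, b` exists, since otherwise
`w a b = - w b a`. Choosing direct or detour on each rung gives simple paths from `x` to `v_{q-1}`
whose weights form a sum of `q - 1` two-element subsets of `ℤ/q`, which is all of `ℤ/q` by
Cauchy–Davenport.
-/

open Pointwise

section Ladder

variable {V G : Type*} (w : V → V → G)

def pathWeight [Add G] [Zero G] : V → List V → G
  | _, [] => 0
  | u, a :: l => w u a + pathWeight a l

def ladderVertices : List (V × V) → List V
  | [] => []
  | (z, v) :: L => z :: v :: ladderVertices L

def ladderEnd : V → List (V × V) → V
  | u, [] => u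
  | _, (_, v) :: L => ladderEnd v L

/-- The paths through a ladder `(z₁, v₁), …, (zₖ, vₖ)`, each rung going to `vᵢ` directly or
through `zᵢ`; the start vertex is not part of the list. -/
inductive LadderPath : List (V × V) → List V → Prop
  | nil : LadderPath [] []
  | direct {z v : V} {L : List (V × V)} {p : List V} :
      LadderPath L p → LadderPath ((z, v) :: L) (v :: p)
  | detour {z v : V} {L : List (V × V)} {p : List V} :
      LadderPath L p → LadderPath ((z, v) :: L) (z :: v :: p)

def ladderSums [Add G] [Zero G] [DecidableEq G] : V → List (V × V) → Finset G
  | _, [] => {0}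
  | u, (z, v) :: L => ({w u v, w u z + w z v} : Finset G) + ladderSums v L

theorem LadderPath.sublist {L : List (V × V)} {p : List V} (hp : LadderPath L p) :
    p.Sublist (ladderVertices L) := by
  induction hp with
  | nil => exact List.Sublist.slnil
  | @direct z v _ _ _ ih => exact (ih.cons_cons v).cons z
  | @detour z v _ _ _ ih => exact (ih.cons_cons v).cons_cons z

theorem LadderPath.getLast_cons {L : List (V × V)} {p : List V} (hp : LadderPath L p) (u : V) :
    (u :: p).getLast (List.cons_ne_nil u p) = ladderEnd u L := by
  induction hp generalizing u with
  | nil => rfl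
  | direct _ ih => simpa [ladderEnd] using ih _
  | detour _ ih => simpa [ladderEnd] using ih _

theorem ladderEnd_mem_ladderVertices (u : V) {L : List (V × V)} (hL : L ≠ []) :
    ladderEnd u L ∈ ladderVertices L := by
  induction L generalizing u with
  | nil => exact absurd rfl hL
  | cons e L ih =>
    obtain ⟨z, v⟩ := e
    rcases eq_or_ne L [] with rfl | hL'
    · simp [ladderEnd, ladderVertices]
    · simp [ladderEnd, ladderVertices, ih v hL']

theorem sum_get_castSucc_get_succ [AddCommMonoid G] (u : V) (l : List V) :
    ∑ i : Fin l.length, w ((u :: l).get i.castSucc) ((u :: l).get i.succ) = pathWeight w u l := by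
  induction l generalizing u with
  | nil => simp [pathWeight]
  | cons a l ih =>
    exact (Fin.sum_univ_succ (n := l.length) _).trans (congrArg (w u a + ·) (ih a))

theorem exists_ladderPath_pathWeight_eq [AddMonoid G] [DecidableEq G] {u : V}
    {L : List (V × V)} {s : G} (hs : s ∈ ladderSums w u L) :
    ∃ p, LadderPath L p ∧ pathWeight w u p = s := by
  induction L generalizing u s with
  | nil => exact ⟨[], .nil, by simpa [ladderSums, pathWeight, eq_comm] using hs⟩
  | cons e L ih =>
    obtain ⟨z, v⟩ := e
    obtain ⟨a, ha, b, hb, rfl⟩ := Finset.mem_add.mp hs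
    obtain ⟨p, hp, rfl⟩ := ih hb
    rcases Finset.mem_insert.mp ha with rfl | ha
    · exact ⟨v :: p, hp.direct, rfl⟩
    · obtain rfl := Finset.mem_singleton.mp ha
      exact ⟨z :: v :: p, hp.detour, (add_assoc _ _ _).symm⟩

theorem detour_ne_direct_or [AddCommGroup G] (u : V) {z v : V} (h : w z v ≠ -w v z) :
    w u z + w z v ≠ w u v ∨ w u v + w v z ≠ w u z := by
  by_contra! h'
  exact h (by rw [eq_sub_of_add_eq' h'.1, eq_sub_of_add_eq' h'.2, neg_sub])

end Ladder

section ZMod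

variable {V : Type*} {q : ℕ} (w : V → V → ZMod q)

theorem ladderSums_nonempty (u : V) (L : List (V × V)) : (ladderSums w u L).Nonempty := by
  induction L generalizing u with
  | nil => exact Finset.singleton_nonempty 0
  | cons e L ih => exact (Finset.insert_nonempty _ _).add (ih e.2)

theorem card_ladderSums_cons (hq : q.Prime) {u z v : V} (h : w u z + w z v ≠ w u v)
    (L : List (V × V)) :
    min q ((ladderSums w v L).card + 1) ≤ (ladderSums w u ((z, v) :: L)).card := by
  have hcd := ZMod.cauchy_davenport hq (Finset.insert_nonempty (w u v) {w u z + w z v})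
    (ladderSums_nonempty w v L)
  rw [Finset.card_pair h.symm] at hcd
  exact le_trans (le_of_eq (by omega)) hcd

theorem exists_rung (hw : ∀ u v : V, u ≠ v → w u v ≠ -w v u) (u : V) {pool : Finset V}
    (hpool : 1 < pool.card) : ∃ z ∈ pool, ∃ v ∈ pool, z ≠ v ∧ w u z + w z v ≠ w u v := by
  obtain ⟨z, hz, v, hv, hzv⟩ := Finset.one_lt_card.mp hpool
  rcases detour_ne_direct_or w u (hw z v hzv) with h | h
  · exact ⟨z, hz, v, hv, hzv, h⟩
  · exact ⟨v, hv, z, hz, hzv.symm, h⟩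

theorem exists_ladder [DecidableEq V] (hq : q.Prime) (hw : ∀ u v : V, u ≠ v → w u v ≠ -w v u)
    (k : ℕ) (u : V) (pool : Finset V) (hu : u ∉ pool) (hpool : pool.card = 2 * k) :
    ∃ L : List (V × V), L.length = k ∧ (u :: ladderVertices L).Nodup ∧
      (∀ x ∈ ladderVertices L, x ∈ pool) ∧ min q (k + 1) ≤ (ladderSums w u L).card := by
  induction k generalizing u pool with
  | zero => exact ⟨[], rfl, List.nodup_singleton u, nofun, by simp [ladderSums]⟩
  | succ k ih =>
    obtain ⟨z, hz, v, hv, hzv, hrung⟩ := exists_rung w hw u (by omega : 1 < pool.card)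
    have hv' : v ∈ pool.erase z := Finset.mem_erase.mpr ⟨hzv.symm, hv⟩
    obtain ⟨L, hlen, hnodup, hsub, hcard⟩ := ih v ((pool.erase z).erase v)
      (Finset.notMem_erase v _)
      (by rw [Finset.card_erase_of_mem hv', Finset.card_erase_of_mem hz]; omega)
    have hsub' : ∀ x ∈ ladderVertices L, x ≠ v ∧ x ≠ z ∧ x ∈ pool := fun x hx => by
      simpa using hsub x hx
    refine ⟨(z, v) :: L, by simp [hlen], ?_, ?_, ?_⟩
    · simp only [ladderVertices, List.nodup_cons, List.mem_cons, not_or] at hnodup ⊢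
      refine ⟨⟨?_, ?_, fun h => hu (hsub' u h).2.2⟩, ⟨hzv, fun h => (hsub' z h).2.1 rfl⟩, hnodup⟩
      · rintro rfl; exact hu hz
      · rintro rfl; exact hu hv
    · simp only [ladderVertices, List.mem_cons]
      rintro x (rfl | rfl | hx)
      exacts [hz, hv, (hsub' x hx).2.2]
    · have := card_ladderSums_cons w hq hrung L
      omega

end ZMod

/-- Let `q` be a prime and `Γ` a complete digraph on `2q - 1` vertices with edge weights
in `ℤ/q`, such that no two distinct vertices `u, v` satisfy `w u v = - w v u`.  Then
there are two distinct vertices `x, y` such that for every residue `s ∈ ℤ/q` there is a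
simple directed path from `x` to `y` of total weight `s`. -/
theorem complete_digraph_all_path_weights
    (q : ℕ) (hq : q.Prime) (V : Type) [Fintype V]
    (hV : Fintype.card V = 2 * q - 1)
    (w : V → V → ZMod q)
    (hw : ∀ u v : V, u ≠ v → w u v ≠ - w v u) :
    ∃ x y : V, x ≠ y ∧ ∀ s : ZMod q,
      ∃ (m : ℕ) (c : Fin (m + 1) → V), Function.Injective c ∧
        c 0 = x ∧ c (Fin.last m) = y ∧
        ∑ i : Fin m, w (c i.castSucc) (c i.succ) = s := by
  classical
  have : NeZero q := ⟨hq.ne_zero⟩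
  have hq2 := hq.two_le
  obtain ⟨x⟩ : Nonempty V := Fintype.card_pos_iff.mp (by omega)
  obtain ⟨L, hlen, hnodup, -, hcard⟩ := exists_ladder w hq hw (q - 1) x (Finset.univ.erase x)
    (Finset.notMem_erase x _)
    (by rw [Finset.card_erase_of_mem (Finset.mem_univ x), Finset.card_univ, hV]; omega)
  have hsums : ladderSums w x L = Finset.univ := Finset.eq_univ_of_card _ <|
    le_antisymm (Finset.card_le_univ _) (by rw [ZMod.card]; omega)
  have hL : L ≠ [] := by rintro rfl; simp at hlen; omega
  refine ⟨x, ladderEnd x L, fun h => (List.nodup_cons.mp hnodup).1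
    (h ▸ ladderEnd_mem_ladderVertices x hL), fun s => ?_⟩
  obtain ⟨p, hp, rfl⟩ := exists_ladderPath_pathWeight_eq w (hsums ▸ Finset.mem_univ s)
  refine ⟨p.length, (x :: p).get, (hnodup.sublist (hp.sublist.cons_cons x)).injective_get, rfl,
    ?_, sum_get_castSucc_get_succ w x p⟩
  rw [← hp.getLast_cons x, List.getLast_eq_getElem]
  rfl
end

section
/- For every prime q, the following holds: every graph G containing the complete graph K_{4q−2} as a minor, whose edges carry weights in ℤ/qℤ, contains a cycle whose total weight (the sum of the weights of its edges) is congruent to 0 modulo q. -/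
open SimpleGraph

/-- A graph `G` contains the complete graph `K_n` as a minor. -/
def HasCliqueMinor {V : Type*} (G : SimpleGraph V) (n : ℕ) : Prop :=
  ∃ B : Fin n → Set V,
    (∀ i, (B i).Nonempty) ∧
    (∀ i, (G.induce (B i)).Connected) ∧
    (∀ i j, i ≠ j → Disjoint (B i) (B j)) ∧
    (∀ i j, i ≠ j → ∃ u ∈ B i, ∃ v ∈ B j, G.Adj u v)

/-- The weight of a walk in a graph whose edges are weighted by `w` (given as a
symmetric function on ordered pairs of vertices). -/
def walkWeight {V : Type*} {G : SimpleGraph V} {q : ℕ} (w : V → V → ZMod q)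
    {u v : V} (p : G.Walk u v) : ZMod q :=
  (p.darts.map fun d => w d.toProd.1 d.toProd.2).sum

/-!
Pair the `4q - 2` branch sets into `2q - 1` blobs, each made of two branch sets joined by a fixed
edge. A path crossing blob `k` enters its first half at the end of an edge coming from blob `p`,
runs to the fixed edge, crosses it, and runs through the second half to the start of an edge
towards blob `r`; its weight therefore splits as `a(k,p) + b(k,r)`. So every cyclic sequence of
distinct blobs yields a graph cycle, whose weight is that of a directed cycle in the complete
digraph on `2q - 1` vertices with arc weights `g(k,r) = b(k,r) + w(k→r) + a(r,k)`.

In this digraph some directed cycle has weight `0`. Otherwise no 2-cycle has weight `0`; adding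
two fresh vertices `x, y` to the paths starting at a fixed vertex, one of the two ways of ending
(`→ y` or `→ x → y`, up to swapping `x` and `y`) changes the weight by a nonzero amount, so by
Cauchy–Davenport the set of weights of paths with a common end grows by one with each new pair.
After `q - 1` pairs every residue is such a weight, in particular the one that the closing arc
turns into `0`.
-/

open Finset SimpleGraph Function
open scoped Pointwise

namespace List

variable {α M : Type*} [AddCommMonoid M]

def pathSum (g : α → α → M) : List α → M
  | x :: y :: l => g x y + pathSum g (y :: l)
  | _ => 0

def cycleSum (g : α → α → M) : List α → M
  | [] => 0
  | x :: l => pathSum g (x :: l) + g (l.getLastD x) x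

@[simp]
lemma pathSum_cons_cons (g : α → α → M) (x y : α) (l : List α) :
    pathSum g (x :: y :: l) = g x y + pathSum g (y :: l) := rfl

@[simp]
lemma pathSum_singleton (g : α → α → M) (x : α) : pathSum g [x] = 0 := rfl

lemma pathSum_concat (g : α → α → M) (l : List α) (x v : α) :
    pathSum g (x :: l ++ [v]) = pathSum g (x :: l) + g (l.getLastD x) v := by
  induction l generalizing x with
  | nil => simp
  | cons y l ih =>
    simp only [cons_append, pathSum_cons_cons] at ih ⊢
    rw [ih, getLastD_cons, add_assoc]

end List

section PathWeights

variable {α M : Type*} [AddCommMonoid M] (g : α → α → M)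

def IsPathWeight (a : α) (s : Set α) (e : α) (z : M) : Prop :=
  ∃ l : List α, (a :: l).Nodup ∧ (∀ v ∈ a :: l, v ∈ s) ∧ l.getLastD a = e ∧
    (a :: l).pathSum g = z

variable {g} {a e v : α} {s t : Set α} {z : M}

lemma IsPathWeight.mono (h : IsPathWeight g a s e z) (hst : s ⊆ t) : IsPathWeight g a t e z := by
  obtain ⟨l, hnd, hs, he, hz⟩ := h
  exact ⟨l, hnd, fun u hu => hst (hs u hu), he, hz⟩

lemma IsPathWeight.snoc (h : IsPathWeight g a s e z) (hv : v ∉ s) :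
    IsPathWeight g a (insert v s) v (z + g e v) := by
  obtain ⟨l, hnd, hs, rfl, rfl⟩ := h
  refine ⟨l ++ [v], ?_, ?_, List.getLastD_concat, List.pathSum_concat g l a v⟩
  · simpa using hnd.concat fun hv' => hv (hs v hv')
  · intro u hu
    simp only [← List.cons_append, List.mem_append, List.mem_singleton] at hu
    rcases hu with hu | rfl
    · exact Set.mem_insert_of_mem _ (hs u hu)
    · exact Set.mem_insert u s

end PathWeights

section ZeroSumDigraphCycle

variable {α : Type*} {q : ℕ} {g : α → α → ZMod q} {a e x y : α} {s : Set α}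
  {Z : Finset (ZMod q)}

lemma exists_pathWeights_detour (hq : q.Prime) (hZ : Z.Nonempty)
    (hZs : ∀ z ∈ Z, IsPathWeight g a s e z) (hx : x ∉ s) (hy : y ∉ s) (hxy : x ≠ y)
    (hδ : g e x + g x y ≠ g e y) :
    ∃ Z' : Finset (ZMod q), min q (#Z + 1) ≤ #Z' ∧
      ∀ z ∈ Z', IsPathWeight g a (insert x (insert y s)) y z := by
  refine ⟨Z + ({g e y, g e x + g x y} : Finset (ZMod q)), ?_, ?_⟩
  · have h := ZMod.cauchy_davenport hq hZ (insert_nonempty (g e y) {g e x + g x y})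
    rwa [card_pair hδ.symm, Nat.add_sub_assoc one_le_two] at h
  · intro z' hz'
    obtain ⟨z, hz, t, ht, rfl⟩ := mem_add.mp hz'
    rcases mem_insert.mp ht with rfl | ht
    · exact ((hZs z hz).snoc hy).mono (Set.subset_insert x _)
    · rw [mem_singleton.mp ht, ← add_assoc, Set.insert_comm]
      exact ((hZs z hz).snoc hx).snoc (by simp [hxy.symm, hy])

lemma exists_pathWeights_step (hq : q.Prime) (hZ : Z.Nonempty)
    (hZs : ∀ z ∈ Z, IsPathWeight g a s e z) (hx : x ∉ s) (hy : y ∉ s) (hxy : x ≠ y)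
    (h2 : g x y + g y x ≠ 0) :
    ∃ e', (e' = x ∨ e' = y) ∧ ∃ Z' : Finset (ZMod q), min q (#Z + 1) ≤ #Z' ∧
      ∀ z ∈ Z', IsPathWeight g a (insert x (insert y s)) e' z := by
  by_cases hδ : g e x + g x y = g e y
  · have hδ' : g e y + g y x ≠ g e x := fun h => h2 (by linear_combination hδ + h)
    rw [Set.insert_comm]
    exact ⟨x, .inl rfl, exists_pathWeights_detour hq hZ hZs hy hx hxy.symm hδ'⟩
  · exact ⟨y, .inr rfl, exists_pathWeights_detour hq hZ hZs hx hy hxy hδ⟩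

lemma exists_pathWeights_of_forall_add_swap_ne_zero (hq : q.Prime) {n : ℕ} [NeZero n]
    {g : Fin n → Fin n → ZMod q} (h2 : ∀ x y, x ≠ y → g x y + g y x ≠ 0) (k : ℕ)
    (hk : 2 * k < n) :
    ∃ e, (k ≠ 0 → e ≠ 0) ∧ ∃ Z : Finset (ZMod q), min q (k + 1) ≤ #Z ∧
      ∀ z ∈ Z, IsPathWeight g 0 {v | v.val ≤ 2 * k} e z := by
  induction k with
  | zero =>
    refine ⟨0, by simp, {0}, by simp, fun z hz => ⟨[], by simp, by simp, rfl, ?_⟩⟩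
    simp [mem_singleton.mp hz]
  | succ k ih =>
    obtain ⟨e, -, Z, hcard, hZs⟩ := ih (by omega)
    have hZ : Z.Nonempty := card_pos.mp (by have := hq.pos; omega)
    let x : Fin n := ⟨2 * k + 1, by omega⟩
    let y : Fin n := ⟨2 * k + 2, by omega⟩
    have hxy : x ≠ y := by simp [x, y, Fin.ext_iff]
    obtain ⟨e', he', Z', hcard', hZ's⟩ :=
      exists_pathWeights_step hq hZ hZs (by simp [x]) (by simp [y]) hxy (h2 x y hxy)
    refine ⟨e', ?_, Z', by omega, fun z hz => (hZ's z hz).mono ?_⟩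
    · rintro - rfl
      rcases he' with h | h <;> simp [x, y, Fin.ext_iff] at h
    · intro v hv
      simp only [Set.mem_insert_iff, Set.mem_ofPred_eq, Fin.ext_iff, x, y] at hv ⊢
      omega

theorem exists_cycleSum_eq_zero (hq : q.Prime) {n : ℕ} (hn : 2 * q - 1 ≤ n)
    (g : Fin n → Fin n → ZMod q) :
    ∃ L : List (Fin n), L.Nodup ∧ 2 ≤ L.length ∧ L.cycleSum g = 0 := by
  by_cases h2 : ∃ x y, x ≠ y ∧ g x y + g y x = 0
  · obtain ⟨x, y, hxy, h⟩ := h2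
    exact ⟨[x, y], by simpa using hxy, le_rfl, by simpa [List.cycleSum] using h⟩
  push Not at h2
  have : Fact q.Prime := ⟨hq⟩
  have : NeZero n := ⟨by have := hq.two_le; omega⟩
  obtain ⟨e, he, Z, hcard, hZs⟩ :=
    exists_pathWeights_of_forall_add_swap_ne_zero hq h2 (q - 1) (by have := hq.two_le; omega)
  have hZ : Z = univ := eq_univ_of_card Z <| by
    have := card_le_univ Z
    rw [ZMod.card] at this ⊢
    have := hq.pos
    omega
  obtain ⟨l, hnd, -, rfl, hz⟩ := hZs (-g e 0) (hZ ▸ mem_univ _)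
  refine ⟨0 :: l, hnd, ?_, by simp [List.cycleSum, hz]⟩
  rcases l with _ | ⟨v, l⟩
  · exact absurd rfl (he (by have := hq.two_le; omega))
  · simp

section WalkWeight

variable {V : Type*} {G : SimpleGraph V} {q : ℕ} (w : V → V → ZMod q)

lemma walkWeight_cons {u v x : V} (h : G.Adj u v) (p : G.Walk v x) :
    walkWeight w (Walk.cons h p) = w u v + walkWeight w p := by
  simp [walkWeight]

lemma walkWeight_append {u v x : V} (p : G.Walk u v) (p' : G.Walk v x) :
    walkWeight w (p.append p') = walkWeight w p + walkWeight w p' := by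
  simp [walkWeight]

lemma exists_isPath_append_edge {s t : Set V} (hst : Disjoint s t) {x u v y : V}
    {P : G.Walk x u} {Q : G.Walk v y} (hP : P.IsPath) (hQ : Q.IsPath)
    (hPs : ∀ z ∈ P.support, z ∈ s) (hQt : ∀ z ∈ Q.support, z ∈ t) (h : G.Adj u v) :
    ∃ W : G.Walk x y, W.IsPath ∧ Q.length < W.length ∧
      (∀ z ∈ W.support, z ∈ s ∨ z ∈ t) ∧
      walkWeight w W = walkWeight w P + w u v + walkWeight w Q := by
  refine ⟨P.append (Walk.cons h Q), ?_, by simp; omega, fun z hz => ?_, ?_⟩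
  · rw [Walk.isPath_def, Walk.support_append, Walk.support_cons, List.tail_cons]
    exact hP.support_nodup.append hQ.support_nodup
      fun z hz hz' => Set.disjoint_left.mp hst (hPs z hz) (hQt z hz')
  · rw [Walk.support_append, Walk.support_cons, List.tail_cons, List.mem_append] at hz
    exact hz.imp (hPs z) (hQt z)
  · rw [walkWeight_append, walkWeight_cons, add_assoc]

end WalkWeight

namespace SimpleGraph

variable {V : Type*} {G : SimpleGraph V}

lemma exists_isPath_of_connected_induce {s : Set V} (hs : (G.induce s).Connected) {x y : V}
    (hx : x ∈ s) (hy : y ∈ s) :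
    ∃ p : G.Walk x y, p.IsPath ∧ ∀ z ∈ p.support, z ∈ s := by
  classical
  obtain ⟨p⟩ := hs.preconnected ⟨x, hx⟩ ⟨y, hy⟩
  refine ⟨p.toPath.val.map (Embedding.induce s).toHom,
    p.toPath.2.map Subtype.val_injective, fun z hz => ?_⟩
  obtain ⟨z', -, rfl⟩ := List.mem_map.mp (Walk.support_map _ _ ▸ hz :)
  exact z'.2

/-- A model of `K_m` in which blob `k` can be crossed, from the vertex where the edge coming from
blob `p` arrives to the vertex where the edge towards blob `r` leaves, along a path inside the blob
whose weight splits as `inWeight k p + outWeight k r`. -/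
structure TransitModel (G : SimpleGraph V) {q : ℕ} (w : V → V → ZMod q) (m : ℕ) where
  region : Fin m → Set V
  entry : Fin m → Fin m → V
  exit : Fin m → Fin m → V
  inWeight : Fin m → Fin m → ZMod q
  outWeight : Fin m → Fin m → ZMod q
  pairwise_disjoint : Pairwise (Disjoint on region)
  adj_exit_entry : ∀ k l, k ≠ l → G.Adj (exit k l) (entry l k)
  exists_transit : ∀ k p r, ∃ W : G.Walk (entry k p) (exit k r), W.IsPath ∧ 0 < W.length ∧
    (∀ z ∈ W.support, z ∈ region k) ∧ walkWeight w W = inWeight k p + outWeight k r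

namespace TransitModel

variable {q m : ℕ} {w : V → V → ZMod q} (M : TransitModel G w m)

def arcWeight (k l : Fin m) : ZMod q :=
  M.outWeight k l + w (M.exit k l) (M.entry l k) + M.inWeight l k

lemma exists_chain (l : List (Fin m)) (k p f : Fin m) (hl : (k :: l).Nodup) :
    ∃ W : G.Walk (M.entry k p) (M.exit (l.getLastD k) f), W.IsPath ∧ l.length < W.length ∧
      (∀ z ∈ W.support, ∃ j ∈ k :: l, z ∈ M.region j) ∧
      walkWeight w W =
        M.inWeight k p + (k :: l).pathSum M.arcWeight + M.outWeight (l.getLastD k) f := by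
  induction l generalizing k p with
  | nil =>
    obtain ⟨W, hW, hlen, hsupp, hwt⟩ := M.exists_transit k p f
    refine ⟨W, hW, hlen, fun z hz => ⟨k, List.mem_singleton_self k, hsupp z hz⟩, ?_⟩
    rw [List.pathSum_singleton, add_zero]
    exact hwt
  | cons k' l ih =>
    obtain ⟨W', hW', hlen', hsupp', hwt'⟩ := ih k' k hl.of_cons
    obtain ⟨W, hW, -, hsupp, hwt⟩ := M.exists_transit k p k'
    have hk : k ∉ k' :: l := (List.nodup_cons.mp hl).1
    have hdisj : Disjoint (M.region k) {z | ∃ j ∈ k' :: l, z ∈ M.region j} :=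
      Set.disjoint_left.mpr fun z hz ⟨j, hj, hzj⟩ =>
        have hkj : k ≠ j := fun h => hk (h ▸ hj)
        Set.disjoint_left.mp (M.pairwise_disjoint hkj) hz hzj
    obtain ⟨C, hC, hlen, hsuppC, hwtC⟩ := exists_isPath_append_edge w hdisj hW hW' hsupp hsupp'
      (M.adj_exit_entry k k' fun h => hk (by simp [h]))
    rw [List.getLastD_cons]
    refine ⟨C, hC, by simp only [List.length_cons]; omega, fun z hz => ?_, ?_⟩
    · rcases hsuppC z hz with hz | ⟨j, hj, hzj⟩
      · exact ⟨k, List.mem_cons_self, hz⟩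
      · exact ⟨j, List.mem_cons_of_mem _ hj, hzj⟩
    · rw [hwtC, hwt, hwt', List.pathSum_cons_cons, arcWeight]
      ring

lemma exists_isCycle_walkWeight_eq_cycleSum (L : List (Fin m)) (hL : L.Nodup)
    (hlen : 2 ≤ L.length) :
    ∃ (u : V) (c : G.Walk u u), c.IsCycle ∧ walkWeight w c = L.cycleSum M.arcWeight := by
  obtain _ | ⟨k, _ | ⟨k', l⟩⟩ := L
  · simp at hlen
  · simp at hlen
  set e := (k' :: l).getLastD k
  have he : e ∈ k' :: l := by
    simp only [e, List.getLastD_cons]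
    exact List.getLastD_mem_cons
  have hek : e ≠ k := fun h => (List.nodup_cons.mp hL).1 (h ▸ he)
  obtain ⟨W, hW, hWlen, -, hwt⟩ := M.exists_chain (k' :: l) k e k hL
  refine ⟨_, Walk.cons (M.adj_exit_entry e k hek) W, ?_, ?_⟩
  · simp only [List.length_cons] at hWlen
    exact Walk.isCycle_iff_isPath_tail_and_le_length.mpr
      ⟨by simpa using hW, by rw [Walk.length_cons]; omega⟩
  · rw [walkWeight_cons, hwt, List.cycleSum, arcWeight]
    ring

end TransitModel

end SimpleGraph

/-- Blob `k` consists of the branch sets `2k` and `2k + 1`: it is entered in the first, left from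
the second, and crossed through a fixed edge between them. -/
lemma HasCliqueMinor.nonempty_transitModel {V : Type*} {G : SimpleGraph V} {m q : ℕ}
    (h : HasCliqueMinor G (m * 2)) (w : V → V → ZMod q) : Nonempty (TransitModel G w m) := by
  obtain ⟨B, hne, hconn, hdisj, hadj⟩ := h
  have hedge : ∀ i j, ∃ u ∈ B i, ∃ v ∈ B j, i ≠ j → G.Adj u v := fun i j => by
    by_cases hij : i = j
    · exact ⟨_, (hne i).some_mem, _, (hne j).some_mem, (absurd hij ·)⟩
    · obtain ⟨u, hu, v, hv, huv⟩ := hadj i j hij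
      exact ⟨u, hu, v, hv, fun _ => huv⟩
  choose eu heu ev hev hadj' using hedge
  choose pth hpth hpthS using fun i (x y : V) (hx : x ∈ B i) (hy : y ∈ B i) =>
    exists_isPath_of_connected_induce (hconn i) hx hy
  let idx : Fin m → Fin 2 → Fin (m * 2) := fun k i => finProdFinEquiv (k, i)
  have hidx : ∀ k i l j, idx k i = idx l j ↔ k = l ∧ i = j := fun k i l j => by
    simp [idx, finProdFinEquiv.injective.eq_iff]
  let enter k p := ev (idx p 1) (idx k 0)
  let leave k r := eu (idx k 1) (idx r 0)
  let inPath k p : G.Walk (enter k p) (eu (idx k 0) (idx k 1)) := pth _ _ _ (hev _ _) (heu _ _)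
  let outPath k r : G.Walk (ev (idx k 0) (idx k 1)) (leave k r) := pth _ _ _ (hev _ _) (heu _ _)
  refine ⟨{
    region := fun k => B (idx k 0) ∪ B (idx k 1)
    entry := enter
    exit := leave
    inWeight := fun k p =>
      walkWeight w (inPath k p) + w (eu (idx k 0) (idx k 1)) (ev (idx k 0) (idx k 1))
    outWeight := fun k r => walkWeight w (outPath k r)
    pairwise_disjoint := fun k l hkl => ?_
    adj_exit_entry := fun k l _ => hadj' _ _ (by simp [hidx])
    exists_transit := fun k p r => ?_ }⟩
  · simp only [onFun, Set.disjoint_union_left, Set.disjoint_union_right]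
    exact ⟨⟨hdisj _ _ (by simp [hidx, hkl]), hdisj _ _ (by simp [hidx, hkl])⟩,
      ⟨hdisj _ _ (by simp [hidx, hkl]), hdisj _ _ (by simp [hidx, hkl])⟩⟩
  · obtain ⟨W, hW, hlen, hsupp, hwt⟩ := exists_isPath_append_edge w
      (hdisj (idx k 0) (idx k 1) (by simp [hidx])) (hpth ..) (hpth ..) (hpthS _ _ _ _ _)
      (hpthS _ _ _ _ _) (hadj' (idx k 0) (idx k 1) (by simp [hidx]))
    exact ⟨W, hW, lt_of_le_of_lt (Nat.zero_le _) hlen, hsupp, hwt⟩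

theorem zero_weight_cycle_of_clique_minor_prime_general
    (q : ℕ) (hq : q.Prime) (V : Type) (G : SimpleGraph V)
    (w : V → V → ZMod q)
    (hG : HasCliqueMinor G (4 * q - 2)) :
    ∃ (u : V) (c : G.Walk u u), c.IsCycle ∧ walkWeight w c = 0 := by
  rw [show 4 * q - 2 = (2 * q - 1) * 2 by omega] at hG
  obtain ⟨M⟩ := hG.nonempty_transitModel w
  obtain ⟨L, hL, hlen, hzero⟩ := exists_cycleSum_eq_zero hq le_rfl M.arcWeight
  obtain ⟨u, c, hc, hwt⟩ := M.exists_isCycle_walkWeight_eq_cycleSum L hL hlen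
  exact ⟨u, c, hc, hwt.trans hzero⟩

/-- For every prime `q`, every graph containing `K_{4q-2}` as a minor, with edges
weighted by elements of `ℤ/q`, contains a cycle whose total weight is `0` modulo `q`. -/
theorem zero_weight_cycle_of_clique_minor_prime
    (q : ℕ) (hq : q.Prime) (V : Type) [Fintype V] (G : SimpleGraph V)
    (w : V → V → ZMod q) (hw : ∀ u v : V, w u v = w v u)
    (hG : HasCliqueMinor G (4 * q - 2)) :
    ∃ (u : V) (c : G.Walk u u), c.IsCycle ∧ walkWeight w c = 0 :=
  zero_weight_cycle_of_clique_minor_prime_general q hq V G w hG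
end ZeroSumDigraphCycle
end
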